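/- If a trajectory visits accepting states exactly N times (finitely many), its eventually-discounted return equals ∑_{m=1}^{N} γ^m = γ(1-γ^N)/(1-γ); if it visits accepting states infinitely often, its eventually-discounted return equals γ/(1-γ). Hence the eventually-discounted return is a strictly increasing function of the number of accepting visits, maximized exactly by trajectories with infinitely many accepting visits. -/
import Mathlib


/-- The eventually-discounted return of a 0/1 accepting-visit indicator sequence. -/
noncomputable def eventualReturn (γ : ℝ) (b : ℕ → ℕ) : ℝ :=
  ∑' t : ℕ, γ ^ (∑ k ∈ Finset.range (t + 1), b k) * (b t : ℝ)

lemma ER.partial_sum (γ : ℝ) (hγ : γ ≠ 1) (b : ℕ → ℕ) (hb : ∀ t, b t ≤ 1) (n : ℕ) :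
    ∑ t ∈ Finset.range n, γ ^ (∑ k ∈ Finset.range (t + 1), b k) * (b t : ℝ)
      = γ / (1 - γ) * (1 - γ ^ (∑ k ∈ Finset.range n, b k)) := by
  have h1γ : (1 : ℝ) - γ ≠ 0 := sub_ne_zero.mpr (Ne.symm hγ)
  induction n with
  | zero => simp
  | succ n ih =>
    rw [Finset.sum_range_succ, ih, Finset.sum_range_succ (f := fun k => b k)]
    rcases Nat.le_one_iff_eq_zero_or_eq_one.mp (hb n) with h | h
    · simp [h]
    · rw [h]
      rw [pow_succ]
      push_cast [h]
      field_simp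
      ring
  
lemma ER.count_eq (b : ℕ → ℕ) (hb : ∀ t, b t ≤ 1) (n : ℕ) :
    ∑ k ∈ Finset.range n, b k = ((Finset.range n).filter (fun k => b k = 1)).card := by
  rw [Finset.card_filter, Finset.sum_congr rfl]
  intro k _
  rcases Nat.le_one_iff_eq_zero_or_eq_one.mp (hb k) with h | h <;> simp [h]

lemma ER.finite_case (γ : ℝ) (hγ0 : 0 < γ) (hγ1 : γ < 1) (b : ℕ → ℕ) (hb : ∀ t, b t ≤ 1)
    (N : ℕ) (hfin : {t : ℕ | b t = 1}.Finite) (hN : {t : ℕ | b t = 1}.ncard = N) :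
    eventualReturn γ b = γ * (1 - γ ^ N) / (1 - γ) := by
  obtain ⟨M, hM⟩ : ∃ M, ∀ t ∈ {t : ℕ | b t = 1}, t < M := by
    obtain ⟨M, hM⟩ := hfin.bddAbove
    exact ⟨M + 1, fun t ht => Nat.lt_succ_of_le (hM ht)⟩
  have hdn : ∀ n, M ≤ n → ∑ k ∈ Finset.range n, b k = N := by
    intro n hn
    rw [ER.count_eq b hb]
    have hset : {t : ℕ | b t = 1} = ↑((Finset.range n).filter (fun k => b k = 1)) := by
      ext k
      simp only [Finset.coe_filter, Finset.mem_range, Set.mem_setOf_eq]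
      exact ⟨fun h => ⟨lt_of_lt_of_le (hM k h) hn, h⟩, fun h => h.2⟩
    rw [← hN, hset, Set.ncard_coe_finset]
  have hnonneg : ∀ t, 0 ≤ γ ^ (∑ k ∈ Finset.range (t + 1), b k) * (b t : ℝ) := by
    intro t
    exact mul_nonneg (pow_nonneg hγ0.le _) (Nat.cast_nonneg _)
  have hsum : HasSum (fun t => γ ^ (∑ k ∈ Finset.range (t + 1), b k) * (b t : ℝ))
      (γ * (1 - γ ^ N) / (1 - γ)) := by
    rw [hasSum_iff_tendsto_nat_of_nonneg hnonneg]
    have : ∀ᶠ n in Filter.atTop,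
        ∑ t ∈ Finset.range n, γ ^ (∑ k ∈ Finset.range (t + 1), b k) * (b t : ℝ)
          = γ * (1 - γ ^ N) / (1 - γ) := by
      filter_upwards [Filter.eventually_ge_atTop M] with n hn
      rw [ER.partial_sum γ hγ1.ne b hb n, hdn n hn]
      ring
    exact Filter.Tendsto.congr' (Filter.EventuallyEq.symm this) tendsto_const_nhds
  exact hsum.tsum_eq

lemma ER.infinite_case (γ : ℝ) (hγ0 : 0 < γ) (hγ1 : γ < 1) (b : ℕ → ℕ) (hb : ∀ t, b t ≤ 1)
    (hinf : {t : ℕ | b t = 1}.Infinite) :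
    eventualReturn γ b = γ / (1 - γ) := by
  have htend : Filter.Tendsto (fun n => ∑ k ∈ Finset.range n, b k) Filter.atTop Filter.atTop := by
    apply Filter.tendsto_atTop_atTop_of_monotone
    · intro m n hmn
      exact Finset.sum_le_sum_of_subset (Finset.range_subset_range.mpr hmn)
    · intro m
      obtain ⟨F, hFsub, hFcard⟩ := hinf.exists_subset_card_eq m
      refine ⟨F.sup id + 1, ?_⟩
      rw [ER.count_eq b hb]
      calc m = F.card := hFcard.symm
        _ ≤ _ := Finset.card_le_card ?_
      intro k hk
      simp only [Finset.mem_filter, Finset.mem_range]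
      exact ⟨Nat.lt_succ_of_le (Finset.le_sup (f := id) hk), hFsub hk⟩
  have hpow : Filter.Tendsto (fun n => γ ^ (∑ k ∈ Finset.range n, b k)) Filter.atTop (nhds 0) :=
    (tendsto_pow_atTop_nhds_zero_of_lt_one hγ0.le hγ1).comp htend
  have hnonneg : ∀ t, 0 ≤ γ ^ (∑ k ∈ Finset.range (t + 1), b k) * (b t : ℝ) := fun t =>
    mul_nonneg (pow_nonneg hγ0.le _) (Nat.cast_nonneg _)
  have hsum : HasSum (fun t => γ ^ (∑ k ∈ Finset.range (t + 1), b k) * (b t : ℝ))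
      (γ / (1 - γ)) := by
    rw [hasSum_iff_tendsto_nat_of_nonneg hnonneg]
    have := (tendsto_const_nhds (x := (1 : ℝ)) (f := Filter.atTop (α := ℕ))).sub hpow
    have h2 := this.const_mul (γ / (1 - γ))
    simp only [sub_zero, mul_one] at h2
    refine h2.congr fun n => ?_
    exact (ER.partial_sum γ hγ1.ne b hb n).symm
  exact hsum.tsum_eq

theorem eventual_discounting_return_characterisation
    (γ : ℝ) (hγ0 : 0 < γ) (hγ1 : γ < 1) :
    (∀ b : ℕ → ℕ, (∀ t, b t ≤ 1) → ∀ N : ℕ,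
        {t : ℕ | b t = 1}.Finite → {t : ℕ | b t = 1}.ncard = N →
        eventualReturn γ b = γ * (1 - γ ^ N) / (1 - γ)) ∧
    (∀ b : ℕ → ℕ, (∀ t, b t ≤ 1) → {t : ℕ | b t = 1}.Infinite →
        eventualReturn γ b = γ / (1 - γ)) ∧
    (∀ b₁ b₂ : ℕ → ℕ, (∀ t, b₁ t ≤ 1) → (∀ t, b₂ t ≤ 1) →
        {t : ℕ | b₁ t = 1}.Finite → {t : ℕ | b₂ t = 1}.Finite →
        {t : ℕ | b₁ t = 1}.ncard < {t : ℕ | b₂ t = 1}.ncard →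
        eventualReturn γ b₁ < eventualReturn γ b₂) ∧
    (∀ b₁ b₂ : ℕ → ℕ, (∀ t, b₁ t ≤ 1) → (∀ t, b₂ t ≤ 1) →
        {t : ℕ | b₁ t = 1}.Finite → {t : ℕ | b₂ t = 1}.Infinite →
        eventualReturn γ b₁ < eventualReturn γ b₂) := by
  have h1γ : (0:ℝ) < 1 - γ := by linarith
  refine ⟨fun b hb N hfin hN => ER.finite_case γ hγ0 hγ1 b hb N hfin hN,
          fun b hb hinf => ER.infinite_case γ hγ0 hγ1 b hb hinf, ?_, ?_⟩
  · intro b₁ b₂ hb₁ hb₂ hfin₁ hfin₂ hlt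
    rw [ER.finite_case γ hγ0 hγ1 b₁ hb₁ _ hfin₁ rfl,
        ER.finite_case γ hγ0 hγ1 b₂ hb₂ _ hfin₂ rfl]
    have hp : γ ^ {t : ℕ | b₂ t = 1}.ncard < γ ^ {t : ℕ | b₁ t = 1}.ncard :=
      pow_lt_pow_right_of_lt_one₀ hγ0 hγ1 hlt
    rw [div_lt_div_iff₀ h1γ h1γ]
    nlinarith [mul_pos (mul_pos hγ0 h1γ) (sub_pos.mpr hp)]
  · intro b₁ b₂ hb₁ hb₂ hfin₁ hinf₂
    rw [ER.finite_case γ hγ0 hγ1 b₁ hb₁ _ hfin₁ rfl,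
        ER.infinite_case γ hγ0 hγ1 b₂ hb₂ hinf₂]
    have hp : 0 < γ ^ {t : ℕ | b₁ t = 1}.ncard := pow_pos hγ0 _
    rw [div_lt_div_iff₀ h1γ h1γ]
    nlinarith [mul_pos (mul_pos hγ0 h1γ) hp]
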